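/- The rate of the BG distribution equals 1/σ: that is, lim_{x→∞} −(d/dx) ln f_BG(x; μ, σ, δ) = 1/σ. -/

import Mathlib

open Real Filter

/-- The bimodal Gumbel density. -/
noncomputable def bgPDF (μ σ δ x : ℝ) : ℝ :=
  ((1 - δ * x) ^ 2 + 1) *
    Real.exp (-((x - μ) / σ) - Real.exp (-((x - μ) / σ))) /
      (σ * (1 + δ ^ 2 * σ ^ 2 * π ^ 2 / 6 +
        (δ * μ + δ * σ * Real.eulerMascheroniConstant - 1) ^ 2))

/-!
Up to an additive constant, `log f_BG` is `log ((1 - δ x)² + 1) - t - exp (-t)` with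
`t = (x - μ) / σ`. The derivative of the first term is `O(1/x)` and `exp (-t) → 0`, so only the
linear term `-t` survives in `-(log f_BG)'`, which therefore tends to `1 / σ`.
-/

lemma abs_div_sq_add_one_le_inv_abs (u : ℝ) : |u / (u ^ 2 + 1)| ≤ |u|⁻¹ := by
  rcases eq_or_ne u 0 with rfl | hu
  · simp
  rw [abs_div, abs_of_pos (by positivity : (0 : ℝ) < u ^ 2 + 1),
    div_le_iff₀ (by positivity), ← sq_abs]
  field_simp
  linarith

lemma tendsto_div_sq_add_one_of_tendsto_abs {α : Type*} {l : Filter α} {g : α → ℝ}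
    (hg : Tendsto (fun x => |g x|) l atTop) :
    Tendsto (fun x => g x / (g x ^ 2 + 1)) l (nhds 0) :=
  squeeze_zero_norm (fun x => abs_div_sq_add_one_le_inv_abs (g x))
    (tendsto_inv_atTop_zero.comp hg)

lemma tendsto_abs_sub_mul_atTop (a : ℝ) {b : ℝ} (hb : b ≠ 0) :
    Tendsto (fun x : ℝ => |a - b * x|) atTop atTop := by
  have hlin : Tendsto (fun x : ℝ => |b| * x - |a|) atTop atTop :=
    tendsto_atTop_add_const_right _ _ (tendsto_id.const_mul_atTop (abs_pos.2 hb))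
  refine tendsto_atTop_mono' _ ?_ hlin
  filter_upwards [eventually_ge_atTop 0] with x hx
  calc |b| * x - |a| = |b * x| - |a| := by rw [abs_mul, abs_of_nonneg hx]
    _ ≤ |b * x - a| := abs_sub_abs_le_abs_sub _ _
    _ = |a - b * x| := abs_sub_comm _ _

lemma tendsto_deriv_log_sq_one_sub_mul_add_one (δ : ℝ) :
    Tendsto (fun x : ℝ => 2 * (1 - δ * x) * (-δ) / ((1 - δ * x) ^ 2 + 1)) atTop (nhds 0) := by
  rcases eq_or_ne δ 0 with rfl | hδ
  · simp
  have h := (tendsto_div_sq_add_one_of_tendsto_abs (tendsto_abs_sub_mul_atTop 1 hδ)).const_mul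
    (-2 * δ)
  rw [mul_zero] at h
  exact h.congr fun x => by ring

lemma tendsto_exp_neg_div_atTop (μ : ℝ) {σ : ℝ} (hσ : 0 < σ) :
    Tendsto (fun x : ℝ => exp (-((x - μ) / σ))) atTop (nhds 0) :=
  tendsto_exp_neg_atTop_nhds_zero.comp
    ((tendsto_atTop_add_const_right _ (-μ) tendsto_id).atTop_div_const hσ)

lemma log_bgPDF (μ δ : ℝ) {σ : ℝ} (hσ : σ ≠ 0) (x : ℝ) :
    log (bgPDF μ σ δ x) = log ((1 - δ * x) ^ 2 + 1) +
      (-((x - μ) / σ) - exp (-((x - μ) / σ))) -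
      log (σ * (1 + δ ^ 2 * σ ^ 2 * π ^ 2 / 6 +
        (δ * μ + δ * σ * eulerMascheroniConstant - 1) ^ 2)) := by
  rw [bgPDF, log_div (by positivity) (mul_ne_zero hσ (by positivity)),
    log_mul (by positivity) (exp_ne_zero _), log_exp]

lemma hasDerivAt_log_bgPDF (μ δ : ℝ) {σ : ℝ} (hσ : σ ≠ 0) (x : ℝ) :
    HasDerivAt (fun y => log (bgPDF μ σ δ y))
      (2 * (1 - δ * x) * (-δ) / ((1 - δ * x) ^ 2 + 1) - (1 - exp (-((x - μ) / σ))) / σ) x := by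
  have hquad : HasDerivAt (fun y : ℝ => (1 - δ * y) ^ 2 + 1) (2 * (1 - δ * x) * (-δ)) x := by
    simpa using ((((hasDerivAt_id x).const_mul δ).const_sub 1).pow 2).add_const 1
  have hlin : HasDerivAt (fun y : ℝ => -((y - μ) / σ)) (-(1 / σ)) x := by
    simpa [Pi.neg_def] using (((hasDerivAt_id x).sub_const μ).div_const σ).neg
  exact ((((hquad.log (by positivity)).add (hlin.sub hlin.exp)).sub_const _).congr_deriv
    (by ring)).congr_of_eventuallyEq (Eventually.of_forall (log_bgPDF μ δ hσ))

theorem bg_rate (μ σ δ : ℝ) (hσ : 0 < σ) :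
    Tendsto (fun x : ℝ => -(deriv (fun y => Real.log (bgPDF μ σ δ y)) x))
      atTop (nhds (1 / σ)) := by
  simp_rw [fun x => (hasDerivAt_log_bgPDF μ δ hσ.ne' x).deriv]
  simpa using ((tendsto_deriv_log_sq_one_sub_mul_add_one δ).sub
    (((tendsto_const_nhds (x := (1 : ℝ))).sub (tendsto_exp_neg_div_atTop μ hσ)).div_const σ)).neg
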